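/- arXiv:1306.5806 — 2 statements merged into one kernel-verified Lean document; each statement's English description precedes it below -/
import Mathlib

section
/- Let (S, ρ) be a metric space in which every closed bounded set is compact, and let Q be a probability measure on S with finite Fréchet function F(p) = ∫ρ²(p,q)Q(dq). Then the Fréchet mean set C_Q = argmin_p F(p) is nonempty and compact. -/
open MeasureTheory

/-- On a metric space with the Heine–Borel property (a proper metric space),
for a probability measure with everywhere-finite Fréchet function, the Fréchet mean set
is nonempty and compact. -/
theorem stmt2 {S : Type*} [MetricSpace S] [ProperSpace S] [Nonempty S]
    [MeasurableSpace S] [OpensMeasurableSpace S]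
    (Q : Measure S) [IsProbabilityMeasure Q]
    (F : S → ℝ) (hF : ∀ p, F p = ∫ q, dist p q ^ 2 ∂Q)
    (hInt : ∀ p, Integrable (fun q => dist p q ^ 2) Q) :
    ({p : S | ∀ p', F p ≤ F p'}).Nonempty ∧ IsCompact {p : S | ∀ p', F p ≤ F p'} := by
  classical
  have hF0 : ∀ p, 0 ≤ F p := fun p => (hF p) ▸ integral_nonneg (fun q => by positivity)
  -- dist p · is integrable
  have hGint : ∀ p, Integrable (fun q => dist p q) Q := by
    intro p
    refine ((integrable_const (1:ℝ)).add (hInt p)).mono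
      ((continuous_const.dist continuous_id).aestronglyMeasurable) ?_
    filter_upwards with q
    simp only [Pi.add_apply, Real.norm_eq_abs]
    rw [abs_of_nonneg dist_nonneg, abs_of_nonneg (by positivity)]
    nlinarith [sq_nonneg (dist p q - 1)]
  -- coercivity key inequality
  have key : ∀ p p0 : S, dist p p0 ^ 2 ≤ 2 * F p + 2 * F p0 := by
    intro p p0
    have h1 : ∀ q, dist p p0 ^ 2 ≤ 2 * dist p q ^ 2 + 2 * dist p0 q ^ 2 := by
      intro q
      have ht := dist_triangle p q p0
      have hc : dist q p0 = dist p0 q := dist_comm q p0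
      have hsq : dist p p0 * dist p p0 ≤
          (dist p q + dist q p0) * (dist p q + dist q p0) :=
        mul_le_mul ht ht dist_nonneg (by positivity)
      rw [hc] at hsq
      nlinarith [sq_nonneg (dist p q - dist p0 q)]
    have hconst : dist p p0 ^ 2 = ∫ _q, dist p p0 ^ 2 ∂Q := by
      simp [integral_const]
    rw [hconst, hF p, hF p0]
    calc ∫ _q, dist p p0 ^ 2 ∂Q
        ≤ ∫ q, (2 * dist p q ^ 2 + 2 * dist p0 q ^ 2) ∂Q :=
          integral_mono (integrable_const _)
            (((hInt p).const_mul 2).add ((hInt p0).const_mul 2)) h1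
      _ = 2 * ∫ q, dist p q ^ 2 ∂Q + 2 * ∫ q, dist p0 q ^ 2 ∂Q := by
          rw [integral_add ((hInt p).const_mul 2) ((hInt p0).const_mul 2),
            integral_const_mul, integral_const_mul]
  -- continuity of F
  have hcont : Continuous F := by
    rw [continuous_iff_continuousAt]
    intro p0
    have hbound : ∀ p, |F p - F p0| ≤ dist p p0 ^ 2 + 2 * dist p p0 * ∫ q, dist p0 q ∂Q := by
      intro p
      rw [hF p, hF p0, ← integral_sub (hInt p) (hInt p0)]
      calc |∫ q, (dist p q ^ 2 - dist p0 q ^ 2) ∂Q|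
          ≤ ∫ q, |dist p q ^ 2 - dist p0 q ^ 2| ∂Q := (by simpa [Real.norm_eq_abs] using norm_integral_le_integral_norm (μ := Q) (fun q => dist p q ^ 2 - dist p0 q ^ 2))
        _ ≤ ∫ q, (dist p p0 ^ 2 + 2 * dist p p0 * dist p0 q) ∂Q := by
            refine integral_mono ((hInt p).sub (hInt p0)).abs
              ((integrable_const _).add ((hGint p0).const_mul _)) (fun q => ?_)
            have h4 := abs_le.mp (abs_dist_sub_le p p0 q)
            rw [abs_le]
            constructor <;>
              nlinarith [h4.1, h4.2, dist_nonneg (x := p) (y := q),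
                dist_nonneg (x := p0) (y := q), dist_nonneg (x := p) (y := p0)]
        _ = dist p p0 ^ 2 + 2 * dist p p0 * ∫ q, dist p0 q ∂Q := by
            rw [integral_add (integrable_const _) ((hGint p0).const_mul _),
              integral_const, integral_const_mul]
            simp
    have hg : Filter.Tendsto
        (fun p => dist p p0 ^ 2 + 2 * dist p p0 * ∫ q, dist p0 q ∂Q) (nhds p0) (nhds 0) := by
      have hgc : Continuous (fun p => dist p p0 ^ 2 + 2 * dist p p0 * ∫ q, dist p0 q ∂Q) := by
        continuity
      have := hgc.tendsto p0
      simpa using this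
    have h0 : Filter.Tendsto (fun p => dist (F p) (F p0)) (nhds p0) (nhds 0) := by
      refine squeeze_zero (fun p => dist_nonneg) (fun p => ?_) hg
      rw [Real.dist_eq]; exact hbound p
    exact tendsto_iff_dist_tendsto_zero.mpr h0
  -- main argument
  obtain ⟨p0⟩ := ‹Nonempty S›
  set R : ℝ := Real.sqrt (4 * F p0 + 1) with hRdef
  have hR2 : R ^ 2 = 4 * F p0 + 1 := Real.sq_sqrt (by linarith [hF0 p0])
  have hR0 : 0 ≤ R := Real.sqrt_nonneg _
  set M := {p : S | ∀ p', F p ≤ F p'} with hM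
  have hsub : M ⊆ Metric.closedBall p0 R := by
    intro p hp
    have h1 : F p ≤ F p0 := hp p0
    have h2 := key p p0
    simp only [Metric.mem_closedBall]
    nlinarith [hF0 p0, hF0 p, dist_nonneg (x := p) (y := p0)]
  have hclosed : IsClosed M := by
    have : M = ⋂ p', {p | F p ≤ F p'} := by ext p; simp [hM]
    rw [this]
    exact isClosed_iInter fun p' => isClosed_le hcont continuous_const
  have hcompact : IsCompact M :=
    (isCompact_closedBall p0 R).of_isClosed_subset hclosed hsub
  obtain ⟨p, hpB, hpmin⟩ := (isCompact_closedBall p0 R).exists_isMinOn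
    ⟨p0, Metric.mem_closedBall_self hR0⟩ hcont.continuousOn
  refine ⟨⟨p, fun p' => ?_⟩, hcompact⟩
  by_cases h : p' ∈ Metric.closedBall p0 R
  · exact isMinOn_iff.mp hpmin p' h
  · have hd : R < dist p' p0 := by
      simpa [Metric.mem_closedBall, not_le] using h
    have h2 := key p' p0
    have h3 : F p ≤ F p0 := isMinOn_iff.mp hpmin p0 (Metric.mem_closedBall_self hR0)
    nlinarith [hF0 p', hF0 p0]
end

section
/- On the open book S with metric ρ as above, let Q be a probability measure with finite Fréchet function, and write a point of H as (x⁰, x_{1D}) with x_{1D} ∈ ℝ^D. Then the Fréchet function of Q at a point (k; x⁰, x_{1D}) decomposes as F(k; x⁰, x_{1D}) = G_k(x⁰) + ∫ ‖x_{1D} − z_{1D}‖² Q̃(dz) where Q̃ is the pushforward of Q to H under the projection π(k;x) = x, and G_k(x⁰) = ∫_H (x⁰ − z⁰)² Q_k(dz) + Σ_{k'≠k} ∫_H (x⁰ + z⁰)² Q_{k'}(dz). Consequently, the last D coordinates of any Fréchet mean of Q equal the Euclidean mean μ_{1D} = ∫ z_{1D} Q̃(dz). -/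
/-!
The squared open-book distance is the sum of a term depending only on the leaf and the zero-th
coordinate and the Euclidean term `‖x_{1D} − z_{1D}‖²`, so the Fréchet function splits the same
way. With the leaf and `x⁰` fixed, only the Euclidean term varies with `x_{1D}`, and the identity
`∫ ‖x − f‖² = ‖x − ∫ f‖² + ∫ ‖∫ f − f‖²` shows that it is minimised exactly at the mean.
-/

open MeasureTheory

/-- The open-book distance on `K` copies of the half-space `H = [0,∞) × ℝ^D`. -/
noncomputable def obDist {K D : ℕ} (p q : Fin K × ℝ × EuclideanSpace ℝ (Fin D)) : ℝ :=
  Real.sqrt ((if p.1 = q.1 then (p.2.1 - q.2.1) ^ 2 else (p.2.1 + q.2.1) ^ 2)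
    + ‖p.2.2 - q.2.2‖ ^ 2)

section MeanSquare

variable {α E : Type*} [MeasurableSpace α] {μ : Measure α}
  [NormedAddCommGroup E] {f : α → E}

lemma MeasureTheory.MemLp.integrable_norm_const_sub_sq [IsFiniteMeasure μ] (hf : MemLp f 2 μ)
    (x : E) :
    Integrable (fun a => ‖x - f a‖ ^ 2) μ :=
  (memLp_two_iff_integrable_sq_norm ((memLp_const x).sub hf).1).1 ((memLp_const x).sub hf)

variable [InnerProductSpace ℝ E] [CompleteSpace E]

lemma integral_norm_sub_sq_eq_add [IsProbabilityMeasure μ] (hf : MemLp f 2 μ) (x : E) :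
    ∫ a, ‖x - f a‖ ^ 2 ∂μ = ‖x - ∫ a, f a ∂μ‖ ^ 2 + ∫ a, ‖(∫ b, f b ∂μ) - f a‖ ^ 2 ∂μ := by
  set m := ∫ b, f b ∂μ
  have hdev : Integrable (fun a => m - f a) μ := (integrable_const m).sub (hf.integrable one_le_two)
  have hcross_int : Integrable (fun a => 2 * inner ℝ (x - m) (m - f a)) μ :=
    (hdev.const_inner _).const_mul 2
  have hcross : ∫ a, 2 * inner ℝ (x - m) (m - f a) ∂μ = 0 := by
    rw [integral_const_mul, integral_inner hdev, integral_sub (integrable_const m)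
      (hf.integrable one_le_two), integral_const]
    simp [m]
  calc ∫ a, ‖x - f a‖ ^ 2 ∂μ
      = ∫ a, (‖x - m‖ ^ 2 + 2 * inner ℝ (x - m) (m - f a)) + ‖m - f a‖ ^ 2 ∂μ := by
        congr with a
        rw [← norm_add_sq_real, sub_add_sub_cancel]
    _ = ‖x - m‖ ^ 2 + ∫ a, ‖m - f a‖ ^ 2 ∂μ := by
        rw [integral_add (by exact (integrable_const _).add hcross_int)
          (hf.integrable_norm_const_sub_sq m), integral_add (integrable_const _) hcross_int,
          hcross, integral_const]
        simp

lemma eq_integral_of_integral_norm_sub_sq_le [IsProbabilityMeasure μ] (hf : MemLp f 2 μ) {x : E}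
    (hx : ∫ a, ‖x - f a‖ ^ 2 ∂μ ≤ ∫ a, ‖(∫ b, f b ∂μ) - f a‖ ^ 2 ∂μ) :
    x = ∫ a, f a ∂μ := by
  rw [integral_norm_sub_sq_eq_add hf] at hx
  exact sub_eq_zero.1 (norm_eq_zero.1 (pow_eq_zero_iff two_ne_zero |>.1
    (le_antisymm (by linarith) (sq_nonneg _))))

end MeanSquare

lemma obDist_sq {K D : ℕ} (p q : Fin K × ℝ × EuclideanSpace ℝ (Fin D)) :
    obDist p q ^ 2 = (if p.1 = q.1 then (p.2.1 - q.2.1) ^ 2 else (p.2.1 + q.2.1) ^ 2)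
      + ‖p.2.2 - q.2.2‖ ^ 2 := by
  refine Real.sq_sqrt (add_nonneg ?_ (sq_nonneg _))
  split_ifs <;> exact sq_nonneg _

lemma integral_obDist_sq {K D : ℕ} {Q : Measure (Fin K × ℝ × EuclideanSpace ℝ (Fin D))}
    [IsFiniteMeasure Q] (h0 : MemLp (fun z => z.2.1) 2 Q) (h1 : MemLp (fun z => z.2.2) 2 Q)
    (k : Fin K) (x0 : ℝ) (x1 : EuclideanSpace ℝ (Fin D)) :
    ∫ z, obDist (k, x0, x1) z ^ 2 ∂Q =
      ((∫ z in {z | z.1 = k}, (x0 - z.2.1) ^ 2 ∂Q) + ∫ z in {z | z.1 ≠ k}, (x0 + z.2.1) ^ 2 ∂Q)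
        + ∫ z, ‖x1 - z.2.2‖ ^ 2 ∂Q := by
  have hleaf : MeasurableSet {z : Fin K × ℝ × EuclideanSpace ℝ (Fin D) | z.1 = k} :=
    measurable_fst (measurableSet_singleton k)
  have hsame : Integrable (fun z => (x0 - z.2.1) ^ 2) Q := ((memLp_const x0).sub h0).integrable_sq
  have hother : Integrable (fun z => (x0 + z.2.1) ^ 2) Q := ((memLp_const x0).add h0).integrable_sq
  have hpiece : (fun z : Fin K × ℝ × EuclideanSpace ℝ (Fin D) =>
      if k = z.1 then (x0 - z.2.1) ^ 2 else (x0 + z.2.1) ^ 2) =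
      {z | z.1 = k}.piecewise (fun z => (x0 - z.2.1) ^ 2) (fun z => (x0 + z.2.1) ^ 2) := by
    ext z
    simp only [Set.piecewise, Set.mem_ofPred_eq, eq_comm]
  simp_rw [obDist_sq]
  rw [integral_add _ (h1.integrable_norm_const_sub_sq x1), hpiece,
    integral_piecewise hleaf hsame.integrableOn hother.integrableOn]
  · rfl
  · exact hpiece ▸ Integrable.piecewise hleaf hsame.integrableOn hother.integrableOn

theorem stmt6_general {K D : ℕ}
    (Q : Measure (Fin K × ℝ × EuclideanSpace ℝ (Fin D))) [IsProbabilityMeasure Q]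
    (h0sq : Integrable (fun z => z.2.1 ^ 2) Q)
    (h1sq : Integrable (fun z => ‖z.2.2‖ ^ 2) Q) :
    (∀ (k : Fin K) (x0 : ℝ) (x1 : EuclideanSpace ℝ (Fin D)), 0 ≤ x0 →
      ∫ z, obDist (k, x0, x1) z ^ 2 ∂Q =
        ((∫ z in {z | z.1 = k}, (x0 - z.2.1) ^ 2 ∂Q)
          + ∫ z in {z | z.1 ≠ k}, (x0 + z.2.1) ^ 2 ∂Q)
        + ∫ z, ‖x1 - z.2.2‖ ^ 2 ∂Q) ∧
    (∀ p : Fin K × ℝ × EuclideanSpace ℝ (Fin D), 0 ≤ p.2.1 →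
      (∀ q : Fin K × ℝ × EuclideanSpace ℝ (Fin D), 0 ≤ q.2.1 →
        ∫ z, obDist p z ^ 2 ∂Q ≤ ∫ z, obDist q z ^ 2 ∂Q) →
      p.2.2 = ∫ z, z.2.2 ∂Q) := by
  have h0 : MemLp (fun z => z.2.1) 2 Q := (memLp_two_iff_integrable_sq (by fun_prop)).2 h0sq
  have h1 : MemLp (fun z => z.2.2) 2 Q := (memLp_two_iff_integrable_sq_norm (by fun_prop)).2 h1sq
  refine ⟨fun k x0 x1 _ => integral_obDist_sq h0 h1 k x0 x1, fun ⟨k, x0, x1⟩ hx0 hmin => ?_⟩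
  have hle := hmin (k, x0, ∫ z, z.2.2 ∂Q) hx0
  rw [integral_obDist_sq h0 h1, integral_obDist_sq h0 h1] at hle
  exact eq_integral_of_integral_norm_sub_sq_le h1 (by linarith)

/-- On the open book, the Fréchet function at `(k; x⁰, x_{1D})` decomposes as
`G_k(x⁰) + ∫ ‖x_{1D} − z_{1D}‖² dQ̃`, with
`G_k(x⁰) = ∫_{leaf k} (x⁰−z⁰)² dQ + Σ_{k'≠k} ∫_{leaf k'} (x⁰+z⁰)² dQ`; consequently the last
`D` coordinates of any Fréchet mean equal the Euclidean mean `μ_{1D} = ∫ z_{1D} dQ̃`. -/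
theorem stmt6 {K D : ℕ}
    (Q : Measure (Fin K × ℝ × EuclideanSpace ℝ (Fin D))) [IsProbabilityMeasure Q]
    (hae : ∀ᵐ z ∂Q, 0 ≤ z.2.1)
    (h0sq : Integrable (fun z => z.2.1 ^ 2) Q)
    (h0 : Integrable (fun z => z.2.1) Q)
    (h1sq : Integrable (fun z => ‖z.2.2‖ ^ 2) Q)
    (h1 : Integrable (fun z => z.2.2) Q) :
    (∀ (k : Fin K) (x0 : ℝ) (x1 : EuclideanSpace ℝ (Fin D)), 0 ≤ x0 →
      ∫ z, obDist (k, x0, x1) z ^ 2 ∂Q =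
        ((∫ z in {z | z.1 = k}, (x0 - z.2.1) ^ 2 ∂Q)
          + ∫ z in {z | z.1 ≠ k}, (x0 + z.2.1) ^ 2 ∂Q)
        + ∫ z, ‖x1 - z.2.2‖ ^ 2 ∂Q) ∧
    (∀ p : Fin K × ℝ × EuclideanSpace ℝ (Fin D), 0 ≤ p.2.1 →
      (∀ q : Fin K × ℝ × EuclideanSpace ℝ (Fin D), 0 ≤ q.2.1 →
        ∫ z, obDist p z ^ 2 ∂Q ≤ ∫ z, obDist q z ^ 2 ∂Q) →
      p.2.2 = ∫ z, z.2.2 ∂Q) :=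
  stmt6_general Q h0sq h1sq
end
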